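/- arXiv:0810.0567 — 6 statements merged into one kernel-verified Lean document; each statement's English description precedes it below -/
import Mathlib

section
/- Let C be an (n,k) linear code over GF(q^m) whose trace code Tr(C) is an (n,k') linear code over GF(q), and let H' be an (n-k')×n matrix over GF(q) of rank n-k' such that Tr(C) = {x ∈ GF(q)^n : H' x^T = 0}. Then every row of H', viewed as a vector in GF(q^m)^n via the inclusion GF(q) ⊆ GF(q^m), lies in the dual code C^⊥, and there exists a (k'-k)×n matrix H'' over GF(q^m) such that C = {x ∈ GF(q^m)^n : H' x^T = 0 and H'' x^T = 0}; that is, C has a parity-check matrix of the stacked form [H'; H'']. -/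
/-!
For `c ∈ C`, `a : E` and a row `h` of `H'`, `F`-linearity of the trace gives
`Tr (a * ∑ h i * c i) = ∑ h i * Tr (a * c i) = 0`, since `a • c ∈ C`; nondegeneracy of the trace
form then forces `∑ h i * c i = 0`. So `C` lies in the kernel `V` of `H'` over `E`, and `V` has
dimension `k'` because a right inverse of `H'` over `F` is still one over `E`. Finally, any
`k' - k` linear forms on `V` with joint kernel `C` (coordinates on `V / C`), extended to `E^n`,
are the rows of `H''`.
-/

open Module

section TraceDuality

variable {F E ι : Type*} [Field F] [Field E] [Algebra F E] [Fintype ι]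

theorem Algebra.trace_sum_algebraMap_mul (h : ι → F) (c : ι → E) :
    Algebra.trace F E (∑ i, algebraMap F E (h i) * c i) = ∑ i, h i * Algebra.trace F E (c i) := by
  simp only [← Algebra.smul_def, map_sum, map_smul, smul_eq_mul]

theorem sum_algebraMap_mul_eq_zero_of_sum_mul_trace_eq_zero [FiniteDimensional F E]
    [Algebra.IsSeparable F E] {C : Submodule E (ι → E)} (h : ι → F)
    (hC : ∀ c ∈ C, ∑ i, h i * Algebra.trace F E (c i) = 0) {c : ι → E} (hc : c ∈ C) :
    ∑ i, algebraMap F E (h i) * c i = 0 := by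
  refine (traceForm_nondegenerate F E).1 _ fun a => ?_
  have hac := hC (a • c) (C.smul_mem a hc)
  rw [← Algebra.trace_sum_algebraMap_mul] at hac
  simpa only [Algebra.traceForm_apply, Finset.sum_mul, mul_assoc, Pi.smul_apply, smul_eq_mul,
    mul_comm a] using hac

end TraceDuality

theorem Matrix.mulVec_map_surjective {R S m n : Type*} [CommSemiring R] [CommSemiring S]
    [Fintype m] [DecidableEq m] [Fintype n] (f : R →+* S) {A : Matrix m n R}
    (hA : Function.Surjective A.mulVec) : Function.Surjective (A.map f).mulVec := by
  obtain ⟨B, hB⟩ := Matrix.mulVec_surjective_iff_exists_right_inverse.1 hA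
  exact Matrix.mulVec_surjective_iff_exists_right_inverse.2
    ⟨B.map f, by rw [← Matrix.map_mul, hB, Matrix.map_one f f.map_zero f.map_one]⟩

theorem Matrix.mulVec_surjective_of_rank_eq {K m n : Type*} [Field K] [Fintype m] [Fintype n]
    {A : Matrix m n K} (hA : A.rank = Fintype.card m) : Function.Surjective A.mulVec := by
  have : LinearMap.range A.mulVecLin = ⊤ :=
    Submodule.eq_top_of_finrank_eq (by rwa [finrank_fintype_fun_eq_card])
  exact LinearMap.range_eq_top.1 this

theorem Matrix.finrank_ker_mulVecLin_of_surjective {K m n : Type*} [Field K] [Fintype m]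
    [Fintype n] {A : Matrix m n K} (hA : Function.Surjective A.mulVec) :
    finrank K (LinearMap.ker A.mulVecLin) = Fintype.card n - Fintype.card m := by
  have := A.mulVecLin.finrank_range_add_finrank_ker
  rw [LinearMap.range_eq_top.2 hA, finrank_top, finrank_fintype_fun_eq_card,
    finrank_fintype_fun_eq_card] at this
  omega

theorem Submodule.exists_linearMap_inf_ker_eq {K M : Type*} [Field K] [AddCommGroup M]
    [Module K M] {C V : Submodule K M} [FiniteDimensional K V] (hCV : C ≤ V) {d : ℕ}
    (hd : finrank K C + d = finrank K V) :
    ∃ g : M →ₗ[K] (Fin d → K), V ⊓ LinearMap.ker g = C := by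
  set C' := C.comap V.subtype
  have hquot : finrank K (V ⧸ C') = d := by
    have := C'.finrank_quotient_add_finrank
    rw [(Submodule.comapSubtypeEquivOfLe hCV).finrank_eq] at this
    omega
  let e : (V ⧸ C') ≃ₗ[K] (Fin d → K) := LinearEquiv.ofFinrankEq _ _ (by simpa using hquot)
  obtain ⟨g, hg⟩ := LinearMap.exists_extend (e.toLinearMap ∘ₗ C'.mkQ)
  have hgV (x : M) (hx : x ∈ V) : g x = 0 ↔ x ∈ C := by
    rw [show g x = e (C'.mkQ ⟨x, hx⟩) from LinearMap.congr_fun hg ⟨x, hx⟩,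
      LinearEquiv.map_eq_zero_iff, Submodule.mkQ_apply, Submodule.Quotient.mk_eq_zero]
    rfl
  exact ⟨g, Submodule.ext fun x =>
    ⟨fun ⟨hxV, hx⟩ => (hgV x hxV).1 hx, fun hx => ⟨hCV hx, (hgV x (hCV hx)).2 hx⟩⟩⟩

theorem stmt_1_general (F E : Type*) [Field F] [Field E] [Fintype E] [Algebra F E]
    (n k k' : ℕ)
    (C : Submodule E (Fin n → E)) (hk : Module.finrank E C = k)
    (TrC : Submodule F (Fin n → F))
    (hTrC : (TrC : Set (Fin n → F)) =
      {y | ∃ x ∈ C, (fun i => Algebra.trace F E (x i)) = y})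
    (hk' : Module.finrank F TrC = k')
    (H' : Matrix (Fin (n - k')) (Fin n) F)
    (hrank : H'.rank = n - k')
    (hH' : ∀ y : Fin n → F, y ∈ TrC ↔ H'.mulVec y = 0) :
    (∀ r : Fin (n - k'), ∀ c ∈ C, ∑ i, algebraMap F E (H' r i) * c i = 0) ∧
    ∃ H'' : Matrix (Fin (k' - k)) (Fin n) E,
      ∀ x : Fin n → E, x ∈ C ↔
        ((H'.map (algebraMap F E)).mulVec x = 0 ∧ H''.mulVec x = 0) := by
  classical
  have htrace (c) (hc : c ∈ C) : (fun i => Algebra.trace F E (c i)) ∈ TrC := by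
    rw [← SetLike.mem_coe, hTrC]
    exact ⟨c, hc, rfl⟩
  have hdual (r) : ∀ c ∈ C, ∑ i, algebraMap F E (H' r i) * c i = 0 := fun c hc =>
    sum_algebraMap_mul_eq_zero_of_sum_mul_trace_eq_zero (H' r)
      (fun c hc => congrFun ((hH' _).1 (htrace c hc)) r) hc
  set V := LinearMap.ker (H'.map (algebraMap F E)).mulVecLin
  have hk'n : k' ≤ n := hk' ▸ (Submodule.finrank_le TrC).trans_eq (finrank_fin_fun F)
  have hV : finrank E V = k' := by
    have hsurj := Matrix.mulVec_map_surjective (algebraMap F E)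
      (Matrix.mulVec_surjective_of_rank_eq (A := H') (by simpa using hrank))
    rw [Matrix.finrank_ker_mulVecLin_of_surjective hsurj]
    simp only [Fintype.card_fin]
    omega
  have hCV : C ≤ V := fun c hc => funext fun r => hdual r c hc
  have hkk' : k ≤ k' := hk ▸ hV ▸ Submodule.finrank_mono hCV
  obtain ⟨g, hg⟩ := Submodule.exists_linearMap_inf_ker_eq hCV (d := k' - k) (by omega)
  refine ⟨hdual, LinearMap.toMatrix' g, fun x => ?_⟩
  rw [LinearMap.toMatrix'_mulVec, ← hg]
  rfl

/-- If `C` is an `(n,k)` code over `GF(q^m)` whose trace code is an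
`(n,k')` code over `GF(q)` with full-rank parity-check matrix `H'`, then the rows of
`H'` (embedded into `GF(q^m)`) lie in the dual code `C^⊥`, and `C` has a parity-check
matrix of the stacked form `[H'; H'']` for some `(k'-k) × n` matrix `H''` over `GF(q^m)`. -/
theorem stmt_1 (F E : Type*) [Field F] [Field E] [Fintype F] [Fintype E] [Algebra F E]
    (n k k' : ℕ)
    (C : Submodule E (Fin n → E)) (hk : Module.finrank E C = k)
    (TrC : Submodule F (Fin n → F))
    (hTrC : (TrC : Set (Fin n → F)) =
      {y | ∃ x ∈ C, (fun i => Algebra.trace F E (x i)) = y})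
    (hk' : Module.finrank F TrC = k')
    (H' : Matrix (Fin (n - k')) (Fin n) F)
    (hrank : H'.rank = n - k')
    (hH' : ∀ y : Fin n → F, y ∈ TrC ↔ H'.mulVec y = 0) :
    (∀ r : Fin (n - k'), ∀ c ∈ C, ∑ i, algebraMap F E (H' r i) * c i = 0) ∧
    ∃ H'' : Matrix (Fin (k' - k)) (Fin n) E,
      ∀ x : Fin n → E, x ∈ C ↔
        ((H'.map (algebraMap F E)).mulVec x = 0 ∧ H''.mulVec x = 0) :=
  stmt_1_general F E n k k' C hk TrC hTrC hk' H' hrank hH'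
end

section
/- Let C be a nonzero (n,k,d) linear code over GF(q^m) and B a basis of GF(q^m) over GF(q). Let d_i be the minimum distance of the image code Im_B(C). Then d ≤ d_i. Moreover, if the subfield subcode SS(C) = C ∩ GF(q)^n is nonzero with minimum distance d_ss, then d_i ≤ d_ss; hence d ≤ d_i ≤ d_ss. -/
/-!
Writing `x = ∑ⱼ xⱼ βⱼ`, duality gives `Tr(x β'ⱼ) = xⱼ`, so the image of a word replaces each
symbol by its coordinate vector in the basis `B`. A nonzero symbol has a nonzero coordinate
vector, whence `d ≤ dᵢ`. Conversely, if `c` has all its symbols in `GF(q)`, then `β₁ c ∈ C`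
and each nonzero symbol `a` of `c` becomes `a β₁`, whose coordinate vector `(a, 0, …, 0)` has
weight one; so `Im_B(β₁ c)` has the weight of `c`, whence `dᵢ ≤ d_ss`.
-/

open Finset

theorem hammingNorm_uncurry {ι κ β : Type*} [Fintype ι] [Fintype κ] [Zero β] [DecidableEq β]
    (g : ι → κ → β) :
    hammingNorm (fun p : ι × κ => g p.1 p.2) = ∑ i, hammingNorm (g i) := by
  simp only [hammingNorm, card_filter, Fintype.sum_prod_type]

theorem hammingNorm_pi_single {κ β : Type*} [Fintype κ] [DecidableEq κ] [Zero β]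
    [DecidableEq β] (k : κ) (a : β) :
    hammingNorm (Pi.single k a : κ → β) = if a ≠ 0 then 1 else 0 := by
  simp only [hammingNorm, card_filter]
  rw [sum_eq_single k (fun j _ hj => by simp [hj]) (by simp)]
  simp

section TraceImage

variable {F E ι : Type*} [Field F] [CommRing E] [Algebra F E]

variable (F) in
/-- `Im_B(c)` for `B'` the dual basis of `B`, indexed by (symbol position, basis index). -/
noncomputable def traceImage {κ : Type*} (B' : ι → E) (c : κ → E) : κ × ι → F :=
  fun p => Algebra.trace F E (c p.1 * B' p.2)

variable [DecidableEq ι]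

def Module.Basis.IsTraceDual (B : Module.Basis ι F E) (B' : ι → E) : Prop :=
  ∀ i j, Algebra.trace F E (B i * B' j) = if i = j then 1 else 0

variable [Fintype ι] {B : Module.Basis ι F E} {B' : ι → E}

theorem Module.Basis.IsTraceDual.trace_mul_eq_repr (hdual : B.IsTraceDual B') (x : E) (j : ι) :
    Algebra.trace F E (x * B' j) = B.repr x j := by
  conv_lhs => rw [← B.sum_repr x]
  simp only [sum_mul, map_sum, smul_mul_assoc, map_smul, hdual _ _, smul_eq_mul, mul_ite, mul_one,
    mul_zero, sum_ite_eq', mem_univ, if_true]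

theorem Module.Basis.IsTraceDual.traceImage_eq_repr (hdual : B.IsTraceDual B') {κ : Type*}
    (c : κ → E) :
    traceImage F B' c = fun p => B.repr (c p.1) p.2 :=
  funext fun p => hdual.trace_mul_eq_repr (c p.1) p.2

variable [DecidableEq F] [DecidableEq E] {κ : Type*} [Fintype κ]

theorem hammingNorm_le_hammingNorm_traceImage (hdual : B.IsTraceDual B') (c : κ → E) :
    hammingNorm c ≤ hammingNorm (traceImage F B' c) := by
  rw [hdual.traceImage_eq_repr, hammingNorm_uncurry (fun i => ⇑(B.repr (c i))), hammingNorm,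
    card_filter]
  refine sum_le_sum fun i _ => ?_
  split_ifs with hci
  · exact hammingNorm_pos_iff.2 fun h => hci (B.repr.map_eq_zero_iff.1 (DFunLike.coe_injective h))
  · exact Nat.zero_le _

theorem hammingNorm_traceImage_smul_basis [Nontrivial E] (hdual : B.IsTraceDual B') (k : ι)
    {c : κ → E} (hc : ∀ i, c i ∈ (algebraMap F E).range) :
    hammingNorm (traceImage F B' (B k • c)) = hammingNorm c := by
  choose x hx using hc
  have hrepr : ∀ i, ⇑(B.repr ((B k • c) i)) = Pi.single k (x i) := fun i => by
    rw [Pi.smul_apply, ← hx, smul_eq_mul, mul_comm, ← Algebra.smul_def, map_smul,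
      B.repr_self, Finsupp.smul_single_one, Finsupp.single_eq_pi_single]
  rw [hdual.traceImage_eq_repr, hammingNorm_uncurry (fun i => ⇑(B.repr ((B k • c) i)))]
  simp only [hrepr, hammingNorm_pi_single]
  rw [← funext hx, hammingNorm_comp (fun _ => algebraMap F E) (fun _ => (algebraMap F E).injective)
    (fun _ => map_zero _), hammingNorm, card_filter]

end TraceImage

theorem stmt_2_general (F E : Type*) [Field F] [Field E]
    [DecidableEq F] [DecidableEq E] [Algebra F E]
    (m n : ℕ) (B : Module.Basis (Fin m) F E) (B' : Fin m → E)
    (hdual : ∀ i j, Algebra.trace F E (B i * B' j) = if i = j then 1 else 0)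
    (C : Submodule E (Fin n → E))
    (d di : ℕ)
    (hd : IsLeast {w | ∃ c ∈ C, c ≠ 0 ∧ hammingNorm c = w} d)
    (hdi : IsLeast {w | ∃ c ∈ C, c ≠ 0 ∧
      hammingNorm (fun p : Fin n × Fin m => Algebra.trace F E (c p.1 * B' p.2)) = w} di) :
    d ≤ di ∧
    ∀ dss : ℕ,
      IsLeast {w | ∃ c ∈ C, c ≠ 0 ∧ (∀ i, c i ∈ (algebraMap F E).range) ∧
        hammingNorm c = w} dss →
      di ≤ dss := by
  refine ⟨?_, fun dss hdss => ?_⟩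
  · obtain ⟨c, hcC, hc0, rfl⟩ := hdi.1
    exact (hd.2 ⟨c, hcC, hc0, rfl⟩).trans (hammingNorm_le_hammingNorm_traceImage hdual c)
  · obtain ⟨c, hcC, hc0, hsub, rfl⟩ := hdss.1
    obtain ⟨k⟩ := B.index_nonempty
    rw [← hammingNorm_traceImage_smul_basis hdual k hsub]
    exact hdi.2 ⟨B k • c, C.smul_mem _ hcC, smul_ne_zero (B.ne_zero k) hc0, rfl⟩

/-- For a nonzero `(n,k,d)` code `C` over `GF(q^m)` and a basis `B` with
dual basis `B'`, the minimum distance `d_i` of the image code `Im_B(C)` satisfies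
`d ≤ d_i`, and if the subfield subcode `SS(C) = C ∩ GF(q)^n` is nonzero with minimum
distance `d_ss` then `d_i ≤ d_ss`. (The image of a codeword `c` is the vector indexed
by `Fin n × Fin m` with entries `Tr(c_i β'_j)`.) -/
theorem stmt_2 (F E : Type*) [Field F] [Field E] [Fintype F] [Fintype E]
    [DecidableEq F] [DecidableEq E] [Algebra F E]
    (m n : ℕ) (B : Module.Basis (Fin m) F E) (B' : Fin m → E)
    (hdual : ∀ i j, Algebra.trace F E (B i * B' j) = if i = j then 1 else 0)
    (C : Submodule E (Fin n → E)) (hC : C ≠ ⊥)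
    (d di : ℕ)
    (hd : IsLeast {w | ∃ c ∈ C, c ≠ 0 ∧ hammingNorm c = w} d)
    (hdi : IsLeast {w | ∃ c ∈ C, c ≠ 0 ∧
      hammingNorm (fun p : Fin n × Fin m => Algebra.trace F E (c p.1 * B' p.2)) = w} di) :
    d ≤ di ∧
    ∀ dss : ℕ,
      IsLeast {w | ∃ c ∈ C, c ≠ 0 ∧ (∀ i, c i ∈ (algebraMap F E).range) ∧
        hammingNorm c = w} dss →
      di ≤ dss :=
  stmt_2_general F E m n B B' hdual C d di hd hdi
end

section
/- Let C be an (n,k,d) linear code over GF(q^m) with k ≥ 1, and suppose its trace code Tr(C) is an (n,k') linear code over GF(q) (necessarily k' ≥ k). Then d ≤ d_{k'-k+1}(Tr(C)), the (k'-k+1)-th generalized Hamming weight of Tr(C). -/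
/-!
Every codeword satisfies `x = ∑ j, β j • Tr (b j • x)` for a basis `b` of `E/F` and its trace-dual
basis `β`, so `C` lies in the `E`-span of `Tr(C)` and `dim_F Tr(C) ≥ dim_E C` for every code `C`.
Now let `D ≤ Tr(C)` have dimension `k' - k + 1` and support `s`. If `|s| < d`, no nonzero codeword
of `C` vanishes off `s`, so puncturing `C` at `s` keeps its dimension `k`. Puncturing commutes
with the trace and kills `D`, hence `k + dim D ≤ dim Tr(C) = k'`, which is absurd.
-/

open Module

namespace Submodule

variable {F M N : Type*} [Field F] [AddCommGroup M] [Module F M] [AddCommGroup N] [Module F N]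

theorem finrank_add_finrank_map_le {T D : Submodule F M} [Module.Finite F T] (g : M →ₗ[F] N)
    (hDT : D ≤ T) (hDg : D ≤ LinearMap.ker g) :
    finrank F D + finrank F (T.map g) ≤ finrank F T := by
  have hker : D.comap T.subtype ≤ LinearMap.ker (g.domRestrict T) := by
    rw [LinearMap.ker_domRestrict]
    exact comap_mono hDg
  rw [← (comapSubtypeEquivOfLe hDT).finrank_eq, ← LinearMap.range_domRestrict, add_comm,
    ← LinearMap.finrank_range_add_finrank_ker (g.domRestrict T)]
  gcongr
  exact finrank_mono hker

theorem finrank_map_eq_of_disjoint_ker {C : Submodule F M} (g : M →ₗ[F] N)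
    (hg : Disjoint C (LinearMap.ker g)) : finrank F (C.map g) = finrank F C := by
  have hinj : Function.Injective (g.domRestrict C) := by
    rw [← LinearMap.ker_eq_bot, LinearMap.ker_eq_bot']
    exact fun x hx => Subtype.ext (disjoint_def.1 hg x x.2 hx)
  rw [← LinearMap.range_domRestrict, (LinearEquiv.ofInjective _ hinj).finrank_eq]

theorem exists_le_finrank_eq (T : Submodule F M) [Module.Finite F T] {r : ℕ}
    (hr : r ≤ finrank F T) : ∃ D ≤ T, finrank F D = r := by
  obtain ⟨v, hv⟩ := exists_linearIndependent_of_le_finrank hr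
  refine ⟨span F (Set.range (T.subtype ∘ v)), ?_, ?_⟩
  · rw [span_le, Set.range_comp]
    rintro _ ⟨_, _, rfl⟩
    exact Subtype.prop _
  · rw [finrank_span_eq_card (hv.map' T.subtype T.ker_subtype), Fintype.card_fin]

variable (E : Type*) [Field E] [Algebra F E] [Module E N] [IsScalarTower F E N]

theorem finrank_span_image_le (T : Submodule F M) [Module.Finite F T] (f : M →ₗ[F] N) :
    finrank E (span E (f '' T)) ≤ finrank F T := by
  let v := finBasis F T
  have hspan : span E (f '' T) ≤ span E (Set.range fun j => f (v j)) := by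
    rw [span_le]
    rintro _ ⟨t, ht, rfl⟩
    rw [← show ((⟨t, ht⟩ : T) : M) = t from rfl, ← v.sum_repr ⟨t, ht⟩]
    simp only [coe_sum, coe_smul, map_sum, map_smul]
    exact sum_mem fun j _ => smul_of_tower_mem _ _ (subset_span ⟨j, rfl⟩)
  have := Module.Finite.span_of_finite E (Set.finite_range fun j => f (v j))
  calc finrank E (span E (f '' T)) ≤ finrank E (span E (Set.range fun j => f (v j))) :=
        finrank_mono hspan
    _ ≤ Fintype.card (Fin (finrank F T)) := finrank_range_le_card _
    _ = finrank F T := Fintype.card_fin _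

end Submodule

theorem hammingNorm_le_ncard {ι : Type*} {β : ι → Type*} [Fintype ι] [∀ i, Zero (β i)]
    [∀ i, DecidableEq (β i)] {x : ∀ i, β i} {s : Set ι} (hx : ∀ i ∉ s, x i = 0) :
    hammingNorm x ≤ s.ncard := by
  rw [hammingNorm, ← Set.ncard_coe_finset]
  exact Set.ncard_le_ncard (fun i hi => by_contra fun h => (Finset.mem_filter.1 hi).2 (hx i h))
    s.toFinite

section TraceCode

variable (F : Type*) {E ι : Type*} [Field F] [Field E] [Algebra F E]

noncomputable def traceCode (C : Submodule E (ι → E)) : Submodule F (ι → F) :=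
  (C.restrictScalars F).map ((Algebra.trace F E).compLeft ι)

variable {F}

theorem coe_traceCode (C : Submodule E (ι → E)) :
    (traceCode F C : Set (ι → F)) = {y | ∃ x ∈ C, (fun i => Algebra.trace F E (x i)) = y} :=
  rfl

theorem traceCode_map_funLeft {κ : Type*} (C : Submodule E (ι → E)) (f : κ → ι) :
    traceCode F (C.map (LinearMap.funLeft E E f)) =
      (traceCode F C).map (LinearMap.funLeft F F f) := by
  rw [traceCode, traceCode, Submodule.restrictScalars_map, ← Submodule.map_comp,
    ← Submodule.map_comp]
  rfl

theorem mem_span_traceCode [FiniteDimensional F E] [Algebra.IsSeparable F E]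
    {C : Submodule E (ι → E)} {x : ι → E} (hx : x ∈ C) :
    x ∈ Submodule.span E ((Algebra.linearMap F E).compLeft ι '' traceCode F C) := by
  let b := finBasis F E
  let β := (Algebra.traceForm F E).dualBasis (traceForm_nondegenerate F E) b
  -- expand each coordinate in the trace-dual basis: `e = ∑ j, Tr (e * b j) • β j`
  have hx_eq : x = ∑ j, β j • (Algebra.linearMap F E).compLeft ι
      ((Algebra.trace F E).compLeft ι (b j • x)) := by
    funext i
    conv_lhs => rw [← β.sum_repr (x i)]
    simp [β, Algebra.smul_def, mul_comm]
  rw [hx_eq]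
  exact Submodule.sum_mem _ fun j _ => Submodule.smul_mem _ _
    (Submodule.subset_span ⟨_, ⟨b j • x, C.smul_mem _ hx, rfl⟩, rfl⟩)

theorem finrank_le_finrank_traceCode [Finite ι] [FiniteDimensional F E] [Algebra.IsSeparable F E]
    (C : Submodule E (ι → E)) : finrank E C ≤ finrank F (traceCode F C) :=
  calc finrank E C
      ≤ finrank E (Submodule.span E ((Algebra.linearMap F E).compLeft ι '' traceCode F C)) :=
        Submodule.finrank_mono fun _ => mem_span_traceCode
    _ ≤ finrank F (traceCode F C) := Submodule.finrank_span_image_le E _ _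

/- Puncture at `s`: it is injective on `C`, commutes with the trace, and kills `D`. -/
theorem finrank_add_finrank_le_finrank_traceCode [Finite ι] [FiniteDimensional F E]
    [Algebra.IsSeparable F E] {C : Submodule E (ι → E)} {D : Submodule F (ι → F)} (s : Set ι)
    (hDC : D ≤ traceCode F C) (hD : ∀ y ∈ D, ∀ i ∉ s, y i = 0)
    (hC : ∀ x ∈ C, (∀ i ∉ s, x i = 0) → x = 0) :
    finrank E C + finrank F D ≤ finrank F (traceCode F C) := by
  let f : ↥sᶜ → ι := Subtype.val
  have hpunct : finrank E (C.map (LinearMap.funLeft E E f)) = finrank E C :=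
    Submodule.finrank_map_eq_of_disjoint_ker _ <| Submodule.disjoint_def.2 fun x hx hx0 =>
      hC x hx fun i hi => congrFun hx0 ⟨i, hi⟩
  have hker : D ≤ LinearMap.ker (LinearMap.funLeft F F f) := fun y hy =>
    funext fun i => hD y hy i i.2
  calc finrank E C + finrank F D
      = finrank E (C.map (LinearMap.funLeft E E f)) + finrank F D := by rw [hpunct]
    _ ≤ finrank F ((traceCode F C).map (LinearMap.funLeft F F f)) + finrank F D := by
        rw [← traceCode_map_funLeft]
        gcongr
        exact finrank_le_finrank_traceCode _
    _ ≤ finrank F (traceCode F C) := by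
        rw [add_comm]
        exact Submodule.finrank_add_finrank_map_le _ hDC hker

end TraceCode

/-- Let `C` be an `(n,k,d)` code over `GF(q^m)` with `k ≥ 1`, whose trace
code `Tr(C)` is an `(n,k')` code over `GF(q)`. Then `d ≤ d_{k'-k+1}(Tr(C))`, the
`(k'-k+1)`-th generalized Hamming weight of `Tr(C)` (the minimum support size of a
`(k'-k+1)`-dimensional subcode). -/
theorem stmt_4 (F E : Type*) [Field F] [Field E] [Fintype F] [Fintype E]
    [DecidableEq E] [Algebra F E]
    (n k k' d : ℕ)
    (C : Submodule E (Fin n → E)) (hk : Module.finrank E C = k) (hk1 : 1 ≤ k)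
    (hd : IsLeast {w | ∃ c ∈ C, c ≠ 0 ∧ hammingNorm c = w} d)
    (TrC : Submodule F (Fin n → F))
    (hTrC : (TrC : Set (Fin n → F)) =
      {y | ∃ x ∈ C, (fun i => Algebra.trace F E (x i)) = y})
    (hk' : Module.finrank F TrC = k') :
    d ≤ sInf {w | ∃ D : Submodule F (Fin n → F), D ≤ TrC ∧
      Module.finrank F ↥D = k' - k + 1 ∧ {i : Fin n | ∃ c ∈ D, c i ≠ 0}.ncard = w} := by
  obtain rfl : TrC = traceCode F C := SetLike.coe_injective (hTrC.trans (coe_traceCode C).symm)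
  have hkk' : k ≤ k' := hk ▸ hk' ▸ finrank_le_finrank_traceCode C
  obtain ⟨D₀, hD₀, hD₀r⟩ := (traceCode F C).exists_le_finrank_eq (r := k' - k + 1) (by omega)
  refine le_csInf ⟨_, D₀, hD₀, hD₀r, rfl⟩ ?_
  rintro _ ⟨D, hDC, hDr, rfl⟩
  by_contra! hlt
  set s := {i : Fin n | ∃ c ∈ D, c i ≠ 0}
  have hD : ∀ y ∈ D, ∀ i ∉ s, y i = 0 := fun y hy i hi => by_contra fun h => hi ⟨y, hy, h⟩
  have hC : ∀ x ∈ C, (∀ i ∉ s, x i = 0) → x = 0 := fun x hx hxs =>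
    by_contra fun hne => (hd.2 ⟨x, hx, hne, rfl⟩).not_gt (hlt.trans_le' (hammingNorm_le_ncard hxs))
  have := finrank_add_finrank_le_finrank_traceCode s hDC hD hC
  omega
end

section
/- Let C be a linear code of length n over GF(2^m) whose trace code Tr(C) is nonzero with minimum distance d', and let t' = ⌊(d'−1)/2⌋. Fix a basis B of GF(2^m) over GF(2) and for v ∈ GF(2^m)^n let v̄_j denote the j-th column of its n×m image matrix. Then for any two distinct codewords c, c' ∈ C, there is no vector v ∈ GF(2^m)^n satisfying both d_H(v̄_j, c̄_j) ≤ t' for all 1 ≤ j ≤ m and d_H(v̄_j, c̄'_j) ≤ t' for all 1 ≤ j ≤ m; i.e., the column-metric spheres of radius t' around distinct codewords are disjoint. -/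
/-!
Subtracting the two codewords gives a nonzero codeword `w = c - c'`. Since the trace against
the dual basis reads off coordinates in `B`, some column `j` of the image of `w` is nonzero, and
that column is the trace vector of the codeword `β'_j • w ∈ C`, so it has weight at least `d'`.
But it is also the difference of the `j`-th columns of `c` and `c'`, which are distinct words
within distance `t' = ⌊(d' - 1)/2⌋` of the `j`-th column of `v`, hence at distance `< d'`.
-/

theorem hammingDist_lt_of_le_half {ι : Type*} [Fintype ι] {β : ι → Type*}
    [∀ i, DecidableEq (β i)] {x y v : ∀ i, β i} {d t : ℕ} (ht : t = (d - 1) / 2)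
    (hx : hammingDist v x ≤ t) (hy : hammingDist v y ≤ t) (hxy : x ≠ y) :
    hammingDist x y < d := by
  have hpos : 0 < hammingDist x y := hammingDist_pos.mpr hxy
  have htri : hammingDist x y ≤ hammingDist v x + hammingDist v y :=
    hammingDist_comm v x ▸ hammingDist_triangle x v y
  omega

section TraceDualBasis

variable {K L ι : Type*} [CommRing K] [CommRing L] [Algebra K L] [Fintype ι] [DecidableEq ι]
  (B : Module.Basis ι K L) {B' : ι → L}

theorem Module.Basis.trace_mul_dual_eq_repr
    (hdual : ∀ i j, Algebra.trace K L (B i * B' j) = if i = j then 1 else 0) (x : L) (j : ι) :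
    Algebra.trace K L (B' j * x) = B.repr x j := by
  conv_lhs => rw [← B.sum_repr x, Finset.mul_sum, map_sum]
  simp_rw [mul_smul_comm, map_smul, mul_comm (B' j), hdual, smul_eq_mul, mul_ite, mul_one,
    mul_zero, Finset.sum_ite_eq', Finset.mem_univ, if_true]

theorem Module.Basis.exists_trace_mul_dual_ne_zero
    (hdual : ∀ i j, Algebra.trace K L (B i * B' j) = if i = j then 1 else 0) {x : L}
    (hx : x ≠ 0) : ∃ j, Algebra.trace K L (B' j * x) ≠ 0 := by
  have hrepr : B.repr x ≠ 0 := by simpa using hx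
  obtain ⟨j, hj⟩ := DFunLike.ne_iff.mp hrepr
  exact ⟨j, by rwa [B.trace_mul_dual_eq_repr hdual]⟩

end TraceDualBasis

theorem trace_mul_sub_eq_trace_smul_sub {K L ι : Type*} [CommRing K] [CommRing L] [Algebra K L]
    (b : L) (c c' : ι → L) :
    ((fun i => Algebra.trace K L (b * c i)) - fun i => Algebra.trace K L (b * c' i)) =
      fun i => Algebra.trace K L ((b • (c - c')) i) := by
  ext i
  simp [mul_sub]

theorem stmt_9_general (E : Type*) [Field E] [Algebra (ZMod 2) E]
    (m n d' t' : ℕ)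
    (B : Module.Basis (Fin m) (ZMod 2) E) (B' : Fin m → E)
    (hdual : ∀ i j, Algebra.trace (ZMod 2) E (B i * B' j) = if i = j then 1 else 0)
    (C : Submodule E (Fin n → E))
    (hd' : IsLeast {w | ∃ c ∈ C, (fun i => Algebra.trace (ZMod 2) E (c i)) ≠ 0 ∧
      hammingNorm (fun i => Algebra.trace (ZMod 2) E (c i)) = w} d')
    (ht' : t' = (d' - 1) / 2)
    (c c' : Fin n → E) (hc : c ∈ C) (hc' : c' ∈ C) (hne : c ≠ c') :
    ¬ ∃ v : Fin n → E,
      (∀ j : Fin m, hammingDist (fun i => Algebra.trace (ZMod 2) E (B' j * v i))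
          (fun i => Algebra.trace (ZMod 2) E (B' j * c i)) ≤ t') ∧
      (∀ j : Fin m, hammingDist (fun i => Algebra.trace (ZMod 2) E (B' j * v i))
          (fun i => Algebra.trace (ZMod 2) E (B' j * c' i)) ≤ t') := by
  rintro ⟨v, hv, hv'⟩
  obtain ⟨i, hi⟩ := Function.ne_iff.mp (sub_ne_zero.mpr hne)
  obtain ⟨j, hj⟩ := B.exists_trace_mul_dual_ne_zero hdual hi
  have hdiff := trace_mul_sub_eq_trace_smul_sub (K := ZMod 2) (B' j) c c'
  have hcol_ne : (fun i => Algebra.trace (ZMod 2) E ((B' j • (c - c')) i)) ≠ 0 :=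
    fun h => hj (congrFun h i)
  have hlt := hammingDist_lt_of_le_half ht' (hv j) (hv' j)
    (sub_ne_zero.mp (hdiff ▸ hcol_ne))
  refine hlt.not_ge ?_
  rw [hammingDist_comm, hammingDist_eq_hammingNorm, neg_add_eq_sub, hdiff]
  exact hd'.2 ⟨_, C.smul_mem _ (sub_mem hc hc'), hcol_ne, rfl⟩

/-- Let `C` be a linear code of length `n` over `GF(2^m)` whose trace code
over `GF(2)` is nonzero with minimum distance `d'`, and `t' = ⌊(d'−1)/2⌋`. Fix a basis
`B` of `GF(2^m)` over `GF(2)` with dual basis `B'`; the `j`-th column of the image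
matrix of `v` is `(Tr(β'_j v_i))_i`. Then for distinct codewords `c, c' ∈ C` there is
no `v` whose image-matrix columns are simultaneously within Hamming distance `t'` of
the corresponding columns of the images of both `c` and `c'`. -/
theorem stmt_9 (E : Type*) [Field E] [Fintype E] [DecidableEq E] [Algebra (ZMod 2) E]
    (m n d' t' : ℕ)
    (B : Module.Basis (Fin m) (ZMod 2) E) (B' : Fin m → E)
    (hdual : ∀ i j, Algebra.trace (ZMod 2) E (B i * B' j) = if i = j then 1 else 0)
    (C : Submodule E (Fin n → E))
    (hd' : IsLeast {w | ∃ c ∈ C, (fun i => Algebra.trace (ZMod 2) E (c i)) ≠ 0 ∧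
      hammingNorm (fun i => Algebra.trace (ZMod 2) E (c i)) = w} d')
    (ht' : t' = (d' - 1) / 2)
    (c c' : Fin n → E) (hc : c ∈ C) (hc' : c' ∈ C) (hne : c ≠ c') :
    ¬ ∃ v : Fin n → E,
      (∀ j : Fin m, hammingDist (fun i => Algebra.trace (ZMod 2) E (B' j * v i))
          (fun i => Algebra.trace (ZMod 2) E (B' j * c i)) ≤ t') ∧
      (∀ j : Fin m, hammingDist (fun i => Algebra.trace (ZMod 2) E (B' j * v i))
          (fun i => Algebra.trace (ZMod 2) E (B' j * c' i)) ≤ t') :=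
  stmt_9_general E m n d' t' B B' hdual C hd' ht' c c' hc hc' hne
end

section
/- Let C be an (n,k) linear code over GF(2^m) with k ≥ 1 whose trace code Tr(C) is nonzero with minimum distance d', and let t' = ⌊(d'−1)/2⌋. Then (2^m)^{n−k} ≥ (Σ_{l=0}^{t'} binom(n,l))^m. (The set of vectors v ∈ GF(2^m)^n whose image-matrix columns are each within Hamming distance t' of the corresponding columns of the image of a fixed codeword has exactly (Σ_{l=0}^{t'} binom(n,l))^m elements, and these sets are disjoint for distinct codewords.) -/
/-!
Write `v ∈ GF(2^m)^n` through its image matrix with respect to a basis `β`; with `β'` the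
trace-dual basis, the `j`-th column of that matrix is the trace word of the vector `β'_j v`.
So if two vectors whose columns all have weight at most `t'` differ by a codeword `c`, every
column of `c` is a trace codeword of weight at most `2t' < d'`, hence zero, and `c = 0`.
The column ball of radius `t'`, with `(∑_{l ≤ t'} binom(n,l))^m` elements, therefore injects
into `GF(2^m)^n ⧸ C`, which has `(2^m)^(n-k)` elements.
-/

open Finset Module

theorem hammingNorm_sub_le {ι : Type*} [Fintype ι] {β : ι → Type*} [∀ i, AddCommGroup (β i)]
    [∀ i, DecidableEq (β i)] (x y : ∀ i, β i) :
    hammingNorm (x - y) ≤ hammingNorm x + hammingNorm y := by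
  rw [sub_eq_neg_add, ← hammingDist_eq_hammingNorm, add_comm, ← hammingDist_zero_right,
    ← hammingDist_zero_left]
  exact hammingDist_triangle y 0 x

theorem Finset.card_filter_card_le (α : Type*) [Fintype α] (t : ℕ) :
    #{s : Finset α | #s ≤ t} = ∑ l ∈ range (t + 1), (Fintype.card α).choose l := by
  rw [card_eq_sum_card_fiberwise (f := Finset.card) (t := range (t + 1))
    (fun s hs => by simpa [Nat.lt_succ_iff] using hs)]
  refine sum_congr rfl fun l hl => ?_
  rw [← card_univ, ← card_powersetCard]
  congr 1
  ext s
  simp only [mem_filter, mem_univ, true_and, mem_powersetCard_univ, and_iff_right_iff_imp]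
  rintro rfl
  simpa [Nat.lt_succ_iff] using hl

def zmodTwoFunEquivFinset (ι : Type*) [Fintype ι] [DecidableEq ι] : (ι → ZMod 2) ≃ Finset ι where
  toFun f := {i | f i ≠ 0}
  invFun s i := if i ∈ s then 1 else 0
  left_inv f := funext fun i => by
    obtain h | h : f i = 0 ∨ f i = 1 := by generalize f i = a; revert a; decide
    all_goals simp [h]
  right_inv s := by ext; simp

theorem card_hammingNorm_le (ι : Type*) [Fintype ι] [DecidableEq ι] (t : ℕ) :
    Nat.card {f : ι → ZMod 2 // hammingNorm f ≤ t} =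
      ∑ l ∈ range (t + 1), (Fintype.card ι).choose l := by
  rw [← card_filter_card_le, ← Fintype.card_subtype, ← Nat.card_eq_fintype_card]
  exact Nat.card_congr ((zmodTwoFunEquivFinset ι).subtypeEquiv fun _ => Iff.rfl)

theorem Submodule.natCard_le_natCard_quotient {R M : Type*} [Ring R] [AddCommGroup M] [Module R M]
    (p : Submodule R M) [Finite (M ⧸ p)] (S : Set M)
    (hS : ∀ x ∈ S, ∀ y ∈ S, x - y ∈ p → x = y) : Nat.card S ≤ Nat.card (M ⧸ p) :=
  Nat.card_le_card_of_injective (fun x => p.mkQ x) fun x y hxy =>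
    Subtype.ext (hS x x.2 y y.2 ((Submodule.Quotient.eq p).mp hxy))

theorem Submodule.natCard_quotient {K M : Type*} [Field K] [Finite K] [AddCommGroup M]
    [Module K M] [Module.Finite K M] (p : Submodule K M) :
    Nat.card (M ⧸ p) = Nat.card K ^ (finrank K M - finrank K p) := by
  rw [Module.natCard_eq_pow_finrank (K := K), Submodule.finrank_quotient]

namespace Module.Basis

section Columns

variable {K M ι ν : Type*} [Semiring K] [AddCommMonoid M] [Module K M] [Finite ι]

/-- The columns of the image matrix of `v`: the `(i, j)` entry `b.repr (v i) j` equals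
`Tr(β'_j v_i)` for the trace-dual basis `β' = b.traceDual`. -/
noncomputable def imageColumns (b : Basis ι K M) : (ν → M) ≃ₗ[K] (ι → ν → K) :=
  (LinearEquiv.piCongrRight fun _ => b.equivFun).trans (Matrix.transposeLinearEquiv ν ι K K)

theorem imageColumns_apply (b : Basis ι K M) (v : ν → M) (j : ι) (i : ν) :
    b.imageColumns v j i = b.repr (v i) j :=
  rfl

theorem natCard_imageColumns_hammingNorm_le {M : Type*} [AddCommGroup M] [Module (ZMod 2) M] [Fintype ν]
    [DecidableEq ν] (b : Basis ι (ZMod 2) M) (t : ℕ) :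
    Nat.card {v : ν → M // ∀ j, hammingNorm (b.imageColumns v j) ≤ t} =
      (∑ l ∈ range (t + 1), (Fintype.card ν).choose l) ^ Nat.card ι := by
  rw [Nat.card_congr ((b.imageColumns.toEquiv.subtypeEquiv
    (p := fun v => ∀ j, hammingNorm (b.imageColumns v j) ≤ t) fun _ => Iff.rfl).trans
    (Equiv.subtypePiEquivPi (p := fun _ f => hammingNorm f ≤ t))), Nat.card_fun,
    card_hammingNorm_le]

end Columns

variable {K L ι ν : Type*} [Field K] [Field L] [Algebra K L]

theorem repr_apply_eq_trace_traceDual_mul [FiniteDimensional K L] [Algebra.IsSeparable K L]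
    [Finite ι] [DecidableEq ι] (b : Basis ι K L) (x : L) (j : ι) :
    b.repr x j = Algebra.trace K L (b.traceDual j * x) := by
  conv_lhs => rw [← b.traceDual_traceDual]
  rw [traceDual_repr_apply, Algebra.traceForm_apply, mul_comm]

variable [FiniteDimensional K L] [Algebra.IsSeparable K L] [Fintype ι] [DecidableEq ι]
  [Fintype ν] [DecidableEq K]

theorem eq_of_sub_mem_of_imageColumns_le (b : Basis ι K L) {C : Submodule L (ν → L)} {t : ℕ}
    (hC : ∀ c ∈ C, (fun i => Algebra.trace K L (c i)) ≠ 0 →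
      2 * t < hammingNorm fun i => Algebra.trace K L (c i))
    {x y : ν → L} (hx : ∀ j, hammingNorm (b.imageColumns x j) ≤ t)
    (hy : ∀ j, hammingNorm (b.imageColumns y j) ≤ t) (hxy : x - y ∈ C) : x = y := by
  by_contra hne
  obtain ⟨j, hj⟩ : ∃ j, b.imageColumns (x - y) j ≠ 0 := by
    by_contra! h
    exact hne (sub_eq_zero.mp (b.imageColumns.map_eq_zero_iff.mp (funext h)))
  have htrace : (fun i => Algebra.trace K L ((b.traceDual j • (x - y)) i)) =
      b.imageColumns (x - y) j :=
    funext fun i => by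
      rw [imageColumns_apply, b.repr_apply_eq_trace_traceDual_mul, Pi.smul_apply, smul_eq_mul]
  have hweight : hammingNorm (b.imageColumns (x - y) j) ≤ 2 * t := by
    rw [map_sub, Pi.sub_apply, two_mul]
    exact (hammingNorm_sub_le _ _).trans (add_le_add (hx j) (hy j))
  have hlt := hC _ (C.smul_mem _ hxy) (htrace ▸ hj)
  rw [htrace] at hlt
  omega

end Module.Basis

theorem stmt_10_general (E : Type*) [Field E] [Fintype E] [Algebra (ZMod 2) E]
    (m n k d' t' : ℕ) (hm : Module.finrank (ZMod 2) E = m)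
    (C : Submodule E (Fin n → E)) (hk : Module.finrank E C = k)
    (hd' : IsLeast {w | ∃ c ∈ C, (fun i => Algebra.trace (ZMod 2) E (c i)) ≠ 0 ∧
      hammingNorm (fun i => Algebra.trace (ZMod 2) E (c i)) = w} d')
    (ht' : t' = (d' - 1) / 2) :
    (∑ l ∈ Finset.range (t' + 1), n.choose l) ^ m ≤ (2 ^ m) ^ (n - k) := by
  subst hm hk ht'
  have hC : ∀ c ∈ C, (fun i => Algebra.trace (ZMod 2) E (c i)) ≠ 0 →
      2 * ((d' - 1) / 2) < hammingNorm fun i => Algebra.trace (ZMod 2) E (c i) := by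
    intro c hc hne
    have := hd'.2 ⟨c, hc, hne, rfl⟩
    have := hammingNorm_pos_iff.mpr hne
    omega
  let b := Module.finBasis (ZMod 2) E
  calc _ = Nat.card {v : Fin n → E // ∀ j, hammingNorm (b.imageColumns v j) ≤ (d' - 1) / 2} := by
        rw [b.natCard_imageColumns_hammingNorm_le, Nat.card_fin, Fintype.card_fin]
    _ ≤ Nat.card ((Fin n → E) ⧸ C) := C.natCard_le_natCard_quotient _ fun x hx y hy =>
        b.eq_of_sub_mem_of_imageColumns_le hC hx hy
    _ = _ := by
      rw [C.natCard_quotient, Module.finrank_fin_fun, Nat.card_eq_fintype_card,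
        Module.card_eq_pow_finrank (K := ZMod 2), ZMod.card]

/-- Let `C` be an `(n,k)` code over `GF(2^m)` with `k ≥ 1` whose trace
code over `GF(2)` is nonzero with minimum distance `d'`, and `t' = ⌊(d'−1)/2⌋`. Then
`(2^m)^{n−k} ≥ (Σ_{l=0}^{t'} C(n,l))^m` (a sphere-packing bound obtained from the
disjoint column-metric spheres of radius `t'` around codewords). -/
theorem stmt_10 (E : Type*) [Field E] [Fintype E] [DecidableEq E] [Algebra (ZMod 2) E]
    (m n k d' t' : ℕ) (hm : Module.finrank (ZMod 2) E = m)
    (C : Submodule E (Fin n → E)) (hk : Module.finrank E C = k) (hk1 : 1 ≤ k)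
    (hd' : IsLeast {w | ∃ c ∈ C, (fun i => Algebra.trace (ZMod 2) E (c i)) ≠ 0 ∧
      hammingNorm (fun i => Algebra.trace (ZMod 2) E (c i)) = w} d')
    (ht' : t' = (d' - 1) / 2) :
    (∑ l ∈ Finset.range (t' + 1), n.choose l) ^ m ≤ (2 ^ m) ^ (n - k) :=
  stmt_10_general E m n k d' t' hm C hk hd' ht'
end

section
/- Let n = 2^m − 1, let α be a primitive element of GF(2^m), and let Z ⊆ {0,1,...,n−1}. Let C = {c ∈ GF(2^m)^n : Σ_{j=0}^{n−1} c_j α^{sj} = 0 for all s ∈ Z} be the cyclic code over GF(2^m) with zero set Z. Then the trace code Tr(C) equals the binary cyclic code with zero set Z̃, where Z̃ = ∪{C_s : s ∈ {0,...,n−1}, C_s ⊆ Z} is the largest union of cyclotomic cosets modulo n contained in Z; that is, Tr(C) = {b ∈ GF(2)^n : Σ_{j=0}^{n−1} b_j α^{sj} = 0 for all s ∈ Z̃}. -/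
/-!
Index the spectrum of a word `c ∈ E^n` by `ZMod n` through the discrete Fourier transform
`ĉ(t) = ∑ⱼ cⱼ α^{tj}`, which is invertible because `n = 2^m - 1` is a unit in `E`. Writing the
trace as `∑_{i<m} x^{2^i}`, the spectrum of `Tr(c)` at `t` is `∑ᵢ ĉ(2^{-i} t)^{2^i}`. So it
vanishes whenever the whole cyclotomic coset of `t` lies in `Z`, which gives `Tr(C) ⊆ B`.

Conversely, the spectrum `β` of a binary word `b ∈ B` satisfies `β(2t) = β(t)²`. In every coset
`C_v` not contained in `Z`, with `v ∉ Z` and `d = |C_v|`, the value `β(v)` lies in the subfield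
`GF(2^d)`. So it is the relative trace `∑_{l<m/d} τ^{2^{dl}}` of some `τ ∈ E`. Putting `τ` at one
such `v` per coset and `0` everywhere else gives a spectrum vanishing on `Z`, and its inverse
transform `c ∈ C` satisfies `Tr(c) = b`. Everything works verbatim over any finite field
`K ⊆ E`, with `q = |K|` in place of `2`.
-/

open Finset Module

theorem sum_filter_dvd_range_mul {M : Type*} [AddCommMonoid M] (f : ℕ → M) {d : ℕ} (hd : 0 < d)
    (k : ℕ) : ∑ i ∈ (range (d * k)).filter (d ∣ ·), f i = ∑ l ∈ range k, f (d * l) := by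
  rw [← sum_image fun a _ b _ h => Nat.eq_of_mul_eq_mul_left hd h]
  congr 1
  ext i
  simp only [mem_filter, mem_range, mem_image]
  constructor
  · rintro ⟨hi, l, rfl⟩
    exact ⟨l, (Nat.mul_lt_mul_left hd).mp hi, rfl⟩
  · rintro ⟨l, hl, rfl⟩
    exact ⟨(Nat.mul_lt_mul_left hd).mpr hl, dvd_mul_right d l⟩

theorem apply_pow_mul_eq_pow_pow {M R : Type*} [Monoid M] [Monoid R] {f : M → R} {q : ℕ} {a : M}
    (hf : ∀ t, f (a * t) = f t ^ q) (k : ℕ) (t : M) : f (a ^ k * t) = f t ^ q ^ k := by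
  induction k with
  | zero => simp
  | succ k ih => rw [pow_succ', mul_assoc, hf, ih, ← pow_mul, ← pow_succ]

section FiniteField

variable {K E : Type*} [Field K] [Fintype K] [Field E] [Algebra K E]

/-- The sum is the trace of `E` over its subfield with `|K| ^ d` elements, the fixed field of the
`d`-th power of the Frobenius. -/
theorem exists_sum_filter_dvd_pow_eq [Finite E] {d : ℕ} (hd : d ∣ finrank K E) {β : E}
    (hβ : β ^ Fintype.card K ^ d = β) :
    ∃ a : E, ∑ i ∈ (range (finrank K E)).filter (d ∣ ·), a ^ Fintype.card K ^ i = β := by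
  obtain ⟨k, hk⟩ := hd
  have hk0 : 0 < k := Nat.pos_of_mul_pos_left (hk ▸ finrank_pos)
  have hd0 : 0 < d := Nat.pos_of_mul_pos_right (hk ▸ finrank_pos)
  set σ := FiniteField.frobeniusAlgEquivOfAlgebraic K E
  have hσ : ∀ x : E, (σ ^ d) x = x ^ Fintype.card K ^ d := fun x => by
    rw [AlgEquiv.coe_pow, FiniteField.coe_frobeniusAlgEquivOfAlgebraic_iterate]
  have horder : orderOf σ = d * k := by
    rw [FiniteField.orderOf_frobeniusAlgEquivOfAlgebraic, hk]
  set F := IntermediateField.fixedField (Subgroup.zpowers (σ ^ d))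
  have hFE : finrank F E = k := by
    rw [IntermediateField.finrank_fixedField_eq_card, Nat.card_zpowers]
    have := orderOf_pow_orderOf_div (x := σ) (n := k) (by rw [horder]; positivity)
      (by rw [horder]; exact dvd_mul_left k d)
    rwa [horder, Nat.mul_div_cancel d hk0] at this
  have hKF : finrank K F = d := by
    have := Module.finrank_mul_finrank K F E
    rw [hFE, hk] at this
    exact Nat.eq_of_mul_eq_mul_right hk0 this
  have hcardF : Nat.card F = Fintype.card K ^ d := by
    rw [Module.natCard_eq_pow_finrank (K := K), hKF, Nat.card_eq_fintype_card]
  have hβF : β ∈ F := by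
    rw [IntermediateField.mem_fixedField_iff]
    rintro g ⟨j, rfl⟩
    exact (MulAction.mem_fixedBy_zpowers_iff_mem_fixedBy (g := σ ^ d)).mpr
      (show (σ ^ d) β = β from (hσ β).trans hβ) j
  obtain ⟨a, ha⟩ := Algebra.trace_surjective F E ⟨β, hβF⟩
  have htrace := FiniteField.algebraMap_trace_eq_sum_pow F E a
  rw [ha, hFE, hcardF] at htrace
  refine ⟨a, ?_⟩
  rw [hk, sum_filter_dvd_range_mul _ hd0]
  simp only [pow_mul]
  exact htrace.symm

theorem card_pow_finrank_eq_one [Fintype E] :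
    (Fintype.card K : ZMod (Fintype.card E - 1)) ^ finrank K E = 1 := by
  rw [← Nat.cast_pow, ← Module.card_eq_pow_finrank,
    ← Nat.sub_add_cancel (Fintype.card_pos (α := E)), Nat.cast_succ, ZMod.natCast_self, zero_add]

end FiniteField

theorem natCast_card_sub_one_ne_zero (E : Type*) [Field E] [Fintype E] :
    ((Fintype.card E - 1 : ℕ) : E) ≠ 0 := by
  rw [Nat.cast_sub Fintype.card_pos, FiniteField.cast_card_eq_zero, Nat.cast_one, zero_sub]
  exact neg_ne_zero.mpr one_ne_zero

section DFT

variable {E : Type*} [Field E] {n : ℕ}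

def dft (ψ : AddChar (ZMod n) E) : (Fin n → E) →ₗ[E] ZMod n → E where
  toFun c t := ∑ j, c j * ψ (t * (j : ℕ))
  map_add' c c' := by ext t; simp [add_mul, sum_add_distrib]
  map_smul' a c := by ext t; simp [mul_sum, mul_assoc]

theorem dft_apply (ψ : AddChar (ZMod n) E) (c : Fin n → E) (t : ZMod n) :
    dft ψ c t = ∑ j, c j * ψ (t * (j : ℕ)) := rfl

def cyclicCode (ψ : AddChar (ZMod n) E) (Z : Set (ZMod n)) : Set (Fin n → E) :=
  {c | ∀ t ∈ Z, dft ψ c t = 0}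

variable [NeZero n]

theorem sum_fin_natCast {M : Type*} [AddCommMonoid M] (f : ZMod n → M) :
    ∑ j : Fin n, f (j : ℕ) = ∑ x, f x := by
  refine Fintype.sum_bijective _ ?_ _ _ fun _ => rfl
  rw [Fintype.bijective_iff_injective_and_card, ZMod.card, Fintype.card_fin]
  refine ⟨fun i j h => Fin.ext ?_, rfl⟩
  simpa [ZMod.val_cast_of_lt i.isLt, ZMod.val_cast_of_lt j.isLt] using congr_arg ZMod.val h

theorem dft_surjective {ψ : AddChar (ZMod n) E} (hψ : ψ.IsPrimitive) (hn : (n : E) ≠ 0) :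
    Function.Surjective (dft ψ) := by
  classical
  intro A
  refine ⟨fun j => (n : E)⁻¹ * ∑ u, A u * ψ (-(u * (j : ℕ))), funext fun t => ?_⟩
  have hchar : ∀ (u : ZMod n) (j : ℕ), ψ (-(u * j)) * ψ (t * j) = ψ (j * (t - u)) := by
    intro u j
    rw [← AddChar.map_add_eq_mul]
    ring_nf
  calc dft ψ _ t = (n : E)⁻¹ * ∑ u, A u * ∑ j : Fin n, ψ ((j : ℕ) * (t - u)) := by
        simp only [dft_apply, sum_mul, mul_sum, mul_assoc, hchar]
        exact sum_comm
    _ = (n : E)⁻¹ * ∑ u, A u * if t - u = 0 then (n : E) else 0 := by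
        congr 1
        refine sum_congr rfl fun u _ => ?_
        rw [sum_fin_natCast (fun x => ψ (x * (t - u))), AddChar.sum_mulShift _ hψ, ZMod.card]
        push_cast
        rfl
    _ = A t := by
        simp only [sub_eq_zero, mul_ite, mul_zero, sum_ite_eq, mem_univ, if_true]
        field_simp

theorem dft_injective {ψ : AddChar (ZMod n) E} (hψ : ψ.IsPrimitive) (hn : (n : E) ≠ 0) :
    Function.Injective (dft ψ) :=
  (LinearMap.injective_iff_surjective_of_finrank_eq_finrank (by simp)).mpr (dft_surjective hψ hn)

theorem dft_zmodChar_natCast {α : E} (hα : α ^ n = 1) (c : Fin n → E) (s : ℕ) :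
    dft (AddChar.zmodChar n hα) c s = ∑ j, c j * α ^ (s * (j : ℕ)) := by
  simp only [dft_apply, ← Nat.cast_mul, AddChar.zmodChar_apply']

end DFT

section CyclotomicCoset

variable {n : ℕ}

def cyclotomicCoset (q : ℕ) (t : ZMod n) : Set (ZMod n) :=
  Set.range fun k : ℕ => (q : ZMod n) ^ k * t

theorem pow_mul_mem_cyclotomicCoset (q k : ℕ) (t : ZMod n) :
    (q : ZMod n) ^ k * t ∈ cyclotomicCoset q t :=
  ⟨k, rfl⟩

theorem mem_cyclotomicCoset_self (q : ℕ) (t : ZMod n) : t ∈ cyclotomicCoset q t :=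
  ⟨0, by simp⟩

theorem cyclotomicCoset_eq_of_mem {q m : ℕ} (hq : (q : ZMod n) ^ m = 1) (hm : m ≠ 0)
    {t w : ZMod n} (hw : w ∈ cyclotomicCoset q t) : cyclotomicCoset q w = cyclotomicCoset q t := by
  obtain ⟨k, rfl⟩ := hw
  ext x
  constructor
  · rintro ⟨j, rfl⟩
    exact ⟨j + k, by ring⟩
  · rintro ⟨j, rfl⟩
    obtain ⟨m, rfl⟩ := Nat.exists_eq_add_one_of_ne_zero hm
    refine ⟨j + m * k, ?_⟩
    calc (q : ZMod n) ^ (j + m * k) * ((q : ZMod n) ^ k * t)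
        = (q : ZMod n) ^ j * ((q : ZMod n) ^ (m + 1)) ^ k * t := by ring
      _ = (q : ZMod n) ^ j * t := by rw [hq, one_pow, mul_one]

theorem pow_mul_eq_self_iff_minimalPeriod_dvd (q : ℕ) (t : ZMod n) (k : ℕ) :
    (q : ZMod n) ^ k * t = t ↔ Function.minimalPeriod ((q : ZMod n) * ·) t ∣ k := by
  rw [← Function.isPeriodicPt_iff_minimalPeriod_dvd, Function.IsPeriodicPt, Function.IsFixedPt,
    mul_left_iterate]

theorem exists_cyclotomicCoset_subset_and_mem_iff {q : ℕ} [NeZero n] {Z : Set ℕ}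
    (hZ : ∀ s ∈ Z, s < n) (u : ℕ) :
    (∃ s, s < n ∧ (∀ v, (∃ k : ℕ, v = s * q ^ k % n) → v ∈ Z) ∧ ∃ k : ℕ, u = s * q ^ k % n) ↔
      u < n ∧ cyclotomicCoset q (u : ZMod n) ⊆ Nat.cast '' Z := by
  have hcast : ∀ s k : ℕ, ((s * q ^ k % n : ℕ) : ZMod n) = (q : ZMod n) ^ k * s := fun s k => by
    rw [ZMod.natCast_mod]
    push_cast
    ring
  constructor
  · rintro ⟨s, -, hs, k, rfl⟩
    refine ⟨Nat.mod_lt _ (NeZero.pos n), ?_⟩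
    rintro _ ⟨j, rfl⟩
    refine ⟨s * q ^ (k + j) % n, hs _ ⟨k + j, rfl⟩, ?_⟩
    rw [hcast, hcast, pow_add]
    ring
  · rintro ⟨hu, hsub⟩
    refine ⟨u, hu, ?_, 0, by simp [Nat.mod_eq_of_lt hu]⟩
    rintro v ⟨k, rfl⟩
    obtain ⟨z, hz, hzv⟩ := hsub ⟨k, (hcast u k).symm⟩
    rw [ZMod.natCast_eq_natCast_iff', Nat.mod_mod, Nat.mod_eq_of_lt (hZ z hz)] at hzv
    exact hzv ▸ hz

end CyclotomicCoset

section SpectralTrace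

variable (K : Type*) [Field K] [Fintype K] {E : Type*} [Field E] [Algebra K E] {n : ℕ}

/-- Since `q ^ m = 1` in `ZMod n`, the factor `q ^ (m - i)` plays the role of `q⁻ⁱ`. -/
noncomputable def spectralTrace (A : ZMod n → E) (t : ZMod n) : E :=
  ∑ i ∈ range (finrank K E),
    A ((Fintype.card K : ZMod n) ^ (finrank K E - i) * t) ^ Fintype.card K ^ i

variable {K}

theorem spectralTrace_card_mul [Fintype E] (hq : (Fintype.card K : ZMod n) ^ finrank K E = 1)
    (A : ZMod n → E) (t : ZMod n) :
    spectralTrace K A (Fintype.card K * t) = spectralTrace K A t ^ Fintype.card K := by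
  set q := Fintype.card K
  set m := finrank K E
  have hEq : ∀ x : E, x ^ q ^ m = x := fun x => by
    rw [← Module.card_eq_pow_finrank, FiniteField.pow_card]
  set f : ℕ → E := fun i => A ((q : ZMod n) ^ (m - i) * (q * t)) ^ q ^ i
  have hperiodic : ∑ i ∈ range m, f (i + 1) = ∑ i ∈ range m, f i := by
    have h := (sum_range_succ' f m).symm.trans (sum_range_succ f m)
    rwa [show f m = f 0 by
      simp only [f, Nat.sub_self, Nat.sub_zero, pow_zero, pow_one, one_mul, hEq, hq],
      add_left_inj] at h
  calc spectralTrace K A (q * t) = ∑ i ∈ range m, f (i + 1) := hperiodic.symm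
    _ = ∑ i ∈ range m, (A ((q : ZMod n) ^ (m - i) * t) ^ q ^ i) ^ q := by
      refine sum_congr rfl fun i hi => ?_
      have hi : m - (i + 1) + 1 = m - i := by have := mem_range.mp hi; omega
      simp only [f, ← mul_assoc, ← pow_succ, hi, ← pow_mul]
    _ = spectralTrace K A t ^ q := (map_sum (FiniteField.frobeniusAlgEquivOfAlgebraic K E) _ _).symm

theorem spectralTrace_eq_zero {A : ZMod n → E} {t : ZMod n}
    (hA : ∀ w ∈ cyclotomicCoset (Fintype.card K) t, A w = 0) : spectralTrace K A t = 0 :=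
  sum_eq_zero fun _ _ => by rw [hA _ (pow_mul_mem_cyclotomicCoset ..), zero_pow (by positivity)]

theorem spectralTrace_eq_sum_filter_dvd (hq : (Fintype.card K : ZMod n) ^ finrank K E = 1)
    {A : ZMod n → E} {v : ZMod n} {τ : E}
    (hA : ∀ w ∈ cyclotomicCoset (Fintype.card K) v, A w = if w = v then τ else 0) :
    spectralTrace K A v = ∑ i ∈ (range (finrank K E)).filter
      (Function.minimalPeriod ((Fintype.card K : ZMod n) * ·) v ∣ ·), τ ^ Fintype.card K ^ i := by
  have hdm := (pow_mul_eq_self_iff_minimalPeriod_dvd _ v _).mp (by rw [hq, one_mul])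
  rw [spectralTrace, sum_filter]
  refine sum_congr rfl fun i hi => ?_
  have hfixed := (pow_mul_eq_self_iff_minimalPeriod_dvd _ v _).trans
    (Nat.dvd_sub_iff_right (mem_range.mp hi).le hdm)
  rw [hA _ (pow_mul_mem_cyclotomicCoset ..)]
  simp only [hfixed]
  split_ifs <;> simp

theorem exists_spectralTrace_eq [Fintype E] (hq : (Fintype.card K : ZMod n) ^ finrank K E = 1)
    (Z : Set (ZMod n)) {β : ZMod n → E} (hβ : ∀ t, β (Fintype.card K * t) = β t ^ Fintype.card K)
    (hβZ : ∀ t, cyclotomicCoset (Fintype.card K) t ⊆ Z → β t = 0) :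
    ∃ A : ZMod n → E, (∀ t ∈ Z, A t = 0) ∧ spectralTrace K A = β := by
  classical
  set q := Fintype.card K
  have hm : finrank K E ≠ 0 := finrank_pos.ne'
  let d : ZMod n → ℕ := fun v => Function.minimalPeriod ((q : ZMod n) * ·) v
  have hτ : ∀ v, ∃ τ : E, ∑ i ∈ (range (finrank K E)).filter (d v ∣ ·), τ ^ q ^ i = β v :=
    fun v => exists_sum_filter_dvd_pow_eq
      ((pow_mul_eq_self_iff_minimalPeriod_dvd _ v _).mp (by rw [hq, one_mul]))
      (by rw [← apply_pow_mul_eq_pow_pow hβ,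
        (pow_mul_eq_self_iff_minimalPeriod_dvd _ v _).mpr dvd_rfl])
  choose τ hτ using hτ
  let rep : ZMod n → ZMod n := fun t => Classical.epsilon fun v => v ∈ cyclotomicCoset q t ∧ v ∉ Z
  refine ⟨fun v => if v ∉ Z ∧ rep v = v then τ v else 0, fun t ht => if_neg (by tauto),
    funext fun t => ?_⟩
  by_cases hZt : ∃ v, v ∈ cyclotomicCoset q t ∧ v ∉ Z
  · obtain ⟨hvt, hvZ⟩ : rep t ∈ cyclotomicCoset q t ∧ rep t ∉ Z := Classical.epsilon_spec hZt
    generalize hv : rep t = v at hvt hvZ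
    have hcoset : ∀ w ∈ cyclotomicCoset q v, cyclotomicCoset q w = cyclotomicCoset q t :=
      fun w hw => (cyclotomicCoset_eq_of_mem hq hm hw).trans (cyclotomicCoset_eq_of_mem hq hm hvt)
    obtain ⟨k, hk⟩ : t ∈ cyclotomicCoset q v := hcoset v (mem_cyclotomicCoset_self q v) ▸
      mem_cyclotomicCoset_self q _
    rw [← hk, apply_pow_mul_eq_pow_pow (spectralTrace_card_mul hq _), apply_pow_mul_eq_pow_pow hβ,
      spectralTrace_eq_sum_filter_dvd hq (τ := τ v), hτ v]
    intro w hw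
    have hrep : rep w = v := by simp only [← hv, rep, hcoset w hw]
    by_cases hwv : w = v
    · subst hwv
      simp [hvZ, hrep]
    · simp [hrep, Ne.symm hwv, hwv]
  · push Not at hZt
    rw [spectralTrace_eq_zero fun w hw => if_neg fun h => h.1 (hZt w hw), hβZ t hZt]

end SpectralTrace

section TraceCode

variable {K E : Type*} [Field K] [Fintype K] [Field E] [Fintype E] [Algebra K E] {n : ℕ}
  {ψ : AddChar (ZMod n) E}

theorem dft_pow_card_pow (c : Fin n → E) (i : ℕ) (t : ZMod n) :
    dft ψ (fun j => c j ^ Fintype.card K ^ i) ((Fintype.card K : ZMod n) ^ i * t) =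
      dft ψ c t ^ Fintype.card K ^ i := by
  have hσ : ∀ x : E,
      (FiniteField.frobeniusAlgEquivOfAlgebraic K E ^ i) x = x ^ Fintype.card K ^ i := fun x => by
    rw [AlgEquiv.coe_pow, FiniteField.coe_frobeniusAlgEquivOfAlgebraic_iterate]
  simp only [dft_apply, ← hσ, map_sum, map_mul]
  refine sum_congr rfl fun j _ => ?_
  rw [hσ, hσ, ← AddChar.map_nsmul_eq_pow, nsmul_eq_mul, mul_assoc]
  push_cast
  rfl

theorem dft_algebraMap_card_mul (b : Fin n → K) (t : ZMod n) :
    dft ψ (fun j => algebraMap K E (b j)) (Fintype.card K * t) =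
      dft ψ (fun j => algebraMap K E (b j)) t ^ Fintype.card K := by
  simpa [← map_pow, FiniteField.pow_card] using
    dft_pow_card_pow (K := K) (ψ := ψ) (fun j => algebraMap K E (b j)) 1 t

theorem dft_trace (hq : (Fintype.card K : ZMod n) ^ finrank K E = 1) (c : Fin n → E) :
    dft ψ (fun j => algebraMap K E (Algebra.trace K E (c j))) = spectralTrace K (dft ψ c) := by
  ext t
  simp only [FiniteField.algebraMap_trace_eq_sum_pow, Nat.card_eq_fintype_card]
  rw [show (fun j => ∑ i ∈ range (finrank K E), c j ^ Fintype.card K ^ i) =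
      ∑ i ∈ range (finrank K E), fun j => c j ^ Fintype.card K ^ i by ext; simp,
    map_sum, Finset.sum_apply, spectralTrace]
  refine sum_congr rfl fun i hi => ?_
  rw [← dft_pow_card_pow, ← mul_assoc, ← pow_add, Nat.add_sub_cancel' (mem_range.mp hi).le, hq,
    one_mul]

theorem image_trace_cyclicCode [NeZero n] (hψ : ψ.IsPrimitive) (hn : (n : E) ≠ 0)
    (hq : (Fintype.card K : ZMod n) ^ finrank K E = 1) (Z : Set (ZMod n)) :
    (fun c j => Algebra.trace K E (c j)) '' cyclicCode ψ Z =
      {b | (fun j => algebraMap K E (b j)) ∈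
        cyclicCode ψ {t | cyclotomicCoset (Fintype.card K) t ⊆ Z}} := by
  ext b
  constructor
  · rintro ⟨c, hc, rfl⟩ t ht
    rw [dft_trace hq]
    exact spectralTrace_eq_zero fun w hw => hc w (ht hw)
  · intro hb
    obtain ⟨A, hAZ, hA⟩ := exists_spectralTrace_eq hq Z (dft_algebraMap_card_mul b) hb
    obtain ⟨c, rfl⟩ := dft_surjective hψ hn A
    refine ⟨c, hAZ, funext fun j => (algebraMap K E).injective ?_⟩
    exact congr_fun (dft_injective hψ hn ((dft_trace hq c).trans hA)) j

end TraceCode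

theorem stmt_13_general (E : Type*) [Field E] [Fintype E] [Algebra (ZMod 2) E]
    (m : ℕ) (hcard : Fintype.card E = 2 ^ m)
    (n : ℕ) (hn : n = 2 ^ m - 1)
    (α : E) (hα : orderOf α = n)
    (Z : Set ℕ) (hZ : ∀ s ∈ Z, s < n)
    (C : Set (Fin n → E))
    (hC : C = {c | ∀ s ∈ Z, ∑ j : Fin n, c j * α ^ (s * (j : ℕ)) = 0})
    (Ztil : Set ℕ)
    (hZtil : Ztil = {u | ∃ s, s < n ∧ (∀ v, (∃ jj : ℕ, v = s * 2 ^ jj % n) → v ∈ Z) ∧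
      (∃ jj : ℕ, u = s * 2 ^ jj % n)}) :
    {y : Fin n → ZMod 2 | ∃ c ∈ C, (fun i => Algebra.trace (ZMod 2) E (c i)) = y} =
    {b : Fin n → ZMod 2 | ∀ s ∈ Ztil,
      ∑ j : Fin n, algebraMap (ZMod 2) E (b j) * α ^ (s * (j : ℕ)) = 0} := by
  subst hC hZtil
  obtain rfl : n = Fintype.card E - 1 := hn.trans (by rw [hcard])
  have : NeZero (Fintype.card E - 1) := ⟨by have := Fintype.one_lt_card (α := E); omega⟩
  have hαn : α ^ (Fintype.card E - 1) = 1 := hα ▸ pow_orderOf_eq_one α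
  have hψ : (AddChar.zmodChar _ hαn).IsPrimitive :=
    AddChar.zmodChar_primitive_of_primitive_root _ (hα ▸ IsPrimitiveRoot.orderOf α)
  have key := image_trace_cyclicCode hψ (natCast_card_sub_one_ne_zero E)
    (card_pow_finrank_eq_one (K := ZMod 2)) (Nat.cast '' Z)
  simp only [cyclicCode, Set.forall_mem_image, dft_zmodChar_natCast, ZMod.card] at key
  refine key.trans (Set.ext fun b => ?_)
  simp only [Set.mem_ofPred_eq]
  constructor
  · intro hb s hs
    rw [← dft_zmodChar_natCast]
    exact hb _ ((exists_cyclotomicCoset_subset_and_mem_iff hZ s).mp hs).2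
  · intro hb t ht
    have := hb t.val ((exists_cyclotomicCoset_subset_and_mem_iff hZ _).mpr
      ⟨t.val_lt, by rwa [ZMod.natCast_zmod_val]⟩)
    rwa [← dft_zmodChar_natCast, ZMod.natCast_zmod_val] at this

/-- Let `n = 2^m − 1`, `α` a primitive element of `GF(2^m)`, and `C` the
cyclic code over `GF(2^m)` of length `n` with zero set `Z ⊆ {0,...,n−1}`. Then the
trace code `Tr(C)` equals the binary cyclic code whose zero set `Z̃` is the largest
union of cyclotomic cosets modulo `n` contained in `Z` (the cyclotomic coset of `s`
being `{s·2^j mod n : j ≥ 0}`). -/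
theorem stmt_13 (E : Type*) [Field E] [Fintype E] [Algebra (ZMod 2) E]
    (m : ℕ) (hm : 1 ≤ m) (hcard : Fintype.card E = 2 ^ m)
    (n : ℕ) (hn : n = 2 ^ m - 1)
    (α : E) (hα : orderOf α = n)
    (Z : Set ℕ) (hZ : ∀ s ∈ Z, s < n)
    (C : Set (Fin n → E))
    (hC : C = {c | ∀ s ∈ Z, ∑ j : Fin n, c j * α ^ (s * (j : ℕ)) = 0})
    (Ztil : Set ℕ)
    (hZtil : Ztil = {u | ∃ s, s < n ∧ (∀ v, (∃ jj : ℕ, v = s * 2 ^ jj % n) → v ∈ Z) ∧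
      (∃ jj : ℕ, u = s * 2 ^ jj % n)}) :
    {y : Fin n → ZMod 2 | ∃ c ∈ C, (fun i => Algebra.trace (ZMod 2) E (c i)) = y} =
    {b : Fin n → ZMod 2 | ∀ s ∈ Ztil,
      ∑ j : Fin n, algebraMap (ZMod 2) E (b j) * α ^ (s * (j : ℕ)) = 0} :=
  stmt_13_general E m hcard n hn α hα Z hZ C hC Ztil hZtil
end
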